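/- Let a ∈ ℝ, b > 1 with b not an integer, and let c > 0. Then lim_{y → 0⁺} y^{−a} M(a, b, −c/y) = c^{−a} Γ(b)/Γ(b − a), where M is the Kummer confluent hypergeometric function. (This is the leading-order asymptotics M(a,b,z) ~ Γ(b)/Γ(b−a) · (−z)^{−a} as z → −∞.) -/

import Mathlib

open MeasureTheory Filter Set Real Nat Topology

/-- Kummer confluent hypergeometric function of the first kind,
`M(a,b,z) = ∑ (a)_n / (b)_n · zⁿ/n!`. -/
noncomputable def kummerM (a b z : ℂ) : ℂ :=
  ∑' n : ℕ, ((ascPochhammer ℂ n).eval a / (ascPochhammer ℂ n).eval b) * z ^ n / (Nat.factorial n : ℂ)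



noncomputable def realM (a b x : ℝ) : ℝ :=
  ∑' n : ℕ, ((ascPochhammer ℝ n).eval a / (ascPochhammer ℝ n).eval b) * x ^ n / (Nat.factorial n : ℝ)

lemma poch_ofReal (a : ℝ) (n : ℕ) :
    (ascPochhammer ℂ n).eval (a : ℂ) = (((ascPochhammer ℝ n).eval a : ℝ) : ℂ) := by
  rw [show ascPochhammer ℂ n = (ascPochhammer ℝ n).map (algebraMap ℝ ℂ) from (ascPochhammer_map _ n).symm,
    Polynomial.eval_map, show ((a : ℂ)) = algebraMap ℝ ℂ a from rfl, Polynomial.eval₂_at_apply]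
  rfl

lemma poch_ge (b : ℝ) (hb : 1 ≤ b) (n : ℕ) :
    (n ! : ℝ) ≤ (ascPochhammer ℝ n).eval b := by
  induction n with
  | zero => simp
  | succ n ih =>
      rw [ascPochhammer_succ_eval]
      push_cast [Nat.factorial_succ]
      calc ((n:ℝ) + 1) * n ! = (n ! : ℝ) * (1 + n) := by ring
      _ ≤ (ascPochhammer ℝ n).eval b * (b + n) := by
          apply mul_le_mul ih (by linarith) (by positivity)
          exact le_trans (by positivity) ih

lemma poch_abs_le (a : ℝ) (n : ℕ) :
    |(ascPochhammer ℝ n).eval a| ≤ (max |a| 1) ^ n * n ! := by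
  induction n with
  | zero => simp
  | succ n ih =>
      rw [ascPochhammer_succ_eval, abs_mul]
      push_cast [Nat.factorial_succ]
      set A := max |a| 1 with hA
      have hA1 : 1 ≤ A := le_max_right _ _
      have h2 : |a + n| ≤ A * (n + 1) := by
        calc |a + n| ≤ |a| + n := by
              refine (abs_add_le _ _).trans ?_
              simp [abs_of_nonneg (show (0:ℝ) ≤ (n:ℝ) by positivity)]
        _ ≤ A * (n + 1) := by
            have h3 : |a| ≤ A := le_max_left _ _
            nlinarith [Nat.cast_nonneg (α := ℝ) n]
      calc |(ascPochhammer ℝ n).eval a| * |a + n| ≤ (A ^ n * n !) * (A * (n+1)) := by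
            apply mul_le_mul ih h2 (abs_nonneg _) (by positivity)
      _ = A ^ (n+1) * ((n + 1) * n !) := by ring

lemma summable_M (a b x : ℝ) (hb : 1 ≤ b) :
    Summable (fun n : ℕ => ((ascPochhammer ℝ n).eval a / (ascPochhammer ℝ n).eval b) * x ^ n / (n ! : ℝ)) := by
  apply Summable.of_norm_bounded (Real.summable_pow_div_factorial ((max |a| 1) * |x|))
  intro n
  have hbp : (0:ℝ) < (ascPochhammer ℝ n).eval b := ascPochhammer_pos n b (by linarith)
  have hfac : (0:ℝ) < (n ! : ℝ) := by positivity
  rw [Real.norm_eq_abs, abs_div, abs_mul, abs_div, abs_of_pos hbp, abs_of_pos hfac, abs_pow]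
  rw [mul_pow]
  have key : |(ascPochhammer ℝ n).eval a| / (ascPochhammer ℝ n).eval b ≤ (max |a| 1) ^ n := by
    calc |(ascPochhammer ℝ n).eval a| / (ascPochhammer ℝ n).eval b
        ≤ ((max |a| 1) ^ n * n !) / (n ! : ℝ) := by
          apply div_le_div₀ (by positivity) (poch_abs_le a n) hfac (poch_ge b hb n)
    _ = (max |a| 1) ^ n := by field_simp
  calc |(ascPochhammer ℝ n).eval a| / (ascPochhammer ℝ n).eval b * |x| ^ n / (n ! : ℝ)
      ≤ (max |a| 1) ^ n * |x| ^ n / (n ! : ℝ) := by gcongr <;> positivity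

lemma kummerM_ofReal (a b x : ℝ) :
    kummerM a b x = (realM a b x : ℂ) := by
  rw [realM, Complex.ofReal_tsum, kummerM]
  congr 1
  funext n
  rw [poch_ofReal, poch_ofReal]
  push_cast
  ring

lemma poch_succ_left_eval (a : ℝ) (n : ℕ) :
    (ascPochhammer ℝ (n+1)).eval a = a * (ascPochhammer ℝ n).eval (a+1) := by
  rw [ascPochhammer_succ_left]
  simp [Polynomial.eval_comp]

lemma realM_rec (a b x : ℝ) (hb : 1 ≤ b) :
    realM (a+1) b x = realM a b x + (x/b) * realM (a+1) (b+1) x := by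
  have hb0 : b ≠ 0 := by linarith
  have s1 := summable_M a b x hb
  have s2 := summable_M (a+1) b x hb
  have s3 := summable_M (a+1) (b+1) x (by linarith)
  have key : ∀ n : ℕ,
      ((ascPochhammer ℝ (n+1)).eval (a+1) / (ascPochhammer ℝ (n+1)).eval b) * x ^ (n+1) / ((n+1)! : ℝ)
      = ((ascPochhammer ℝ (n+1)).eval a / (ascPochhammer ℝ (n+1)).eval b) * x ^ (n+1) / ((n+1)! : ℝ)
        + (x/b) * (((ascPochhammer ℝ n).eval (a+1) / (ascPochhammer ℝ n).eval (b+1)) * x ^ n / (n ! : ℝ)) := by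
    intro n
    have hpb : (0:ℝ) < (ascPochhammer ℝ n).eval (b+1) := ascPochhammer_pos n _ (by linarith)
    have hpb' := hpb.ne'
    rw [poch_succ_left_eval a n, poch_succ_left_eval b n, ascPochhammer_succ_eval, Nat.factorial_succ]
    have hfn : ((n)! : ℝ) ≠ 0 := by positivity
    push_cast
    field_simp
    ring
  rw [realM, realM, realM, Summable.tsum_eq_zero_add s2, Summable.tsum_eq_zero_add s1]
  have hs1' : Summable (fun n : ℕ =>
      ((ascPochhammer ℝ (n+1)).eval a / (ascPochhammer ℝ (n+1)).eval b) * x ^ (n+1) / ((n+1)! : ℝ)) :=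
    (summable_nat_add_iff 1).2 s1
  have hs3' : Summable (fun n : ℕ =>
      (x/b) * (((ascPochhammer ℝ n).eval (a+1) / (ascPochhammer ℝ n).eval (b+1)) * x ^ n / (n ! : ℝ))) :=
    s3.mul_left _
  calc ((ascPochhammer ℝ 0).eval (a+1) / (ascPochhammer ℝ 0).eval b) * x ^ 0 / ((0)! : ℝ)
        + ∑' n : ℕ, ((ascPochhammer ℝ (n+1)).eval (a+1) / (ascPochhammer ℝ (n+1)).eval b) * x ^ (n+1) / ((n+1)! : ℝ)
      = ((ascPochhammer ℝ 0).eval a / (ascPochhammer ℝ 0).eval b) * x ^ 0 / ((0)! : ℝ)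
        + ∑' n : ℕ, (((ascPochhammer ℝ (n+1)).eval a / (ascPochhammer ℝ (n+1)).eval b) * x ^ (n+1) / ((n+1)! : ℝ)
          + (x/b) * (((ascPochhammer ℝ n).eval (a+1) / (ascPochhammer ℝ n).eval (b+1)) * x ^ n / (n ! : ℝ))) := by
        rw [tsum_congr key]; simp [ascPochhammer]
  _ = ((ascPochhammer ℝ 0).eval a / (ascPochhammer ℝ 0).eval b) * x ^ 0 / ((0)! : ℝ)
        + (∑' n : ℕ, ((ascPochhammer ℝ (n+1)).eval a / (ascPochhammer ℝ (n+1)).eval b) * x ^ (n+1) / ((n+1)! : ℝ)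
          + ∑' n : ℕ, (x/b) * (((ascPochhammer ℝ n).eval (a+1) / (ascPochhammer ℝ n).eval (b+1)) * x ^ n / (n ! : ℝ))) := by
        rw [Summable.tsum_add hs1' hs3']
  _ = _ := by rw [tsum_mul_left]; ring

lemma Gamma_poch (a : ℝ) (ha : 0 < a) (n : ℕ) :
    Real.Gamma (a + n) = (ascPochhammer ℝ n).eval a * Real.Gamma a := by
  induction n with
  | zero => simp
  | succ n ih =>
      have h1 : a + ((n:ℕ)+1 : ℕ) = (a + n) + 1 := by push_cast; ring
      have h2 : a + (n:ℝ) ≠ 0 := by positivity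
      rw [h1, Real.Gamma_add_one h2, ih, ascPochhammer_succ_eval]
      ring

lemma real_beta (u v : ℝ) (hu : 0 < u) (hv : 0 < v) :
    ∫ t in (0:ℝ)..1, t ^ (u-1) * (1-t) ^ (v-1) = Real.Gamma u * Real.Gamma v / Real.Gamma (u+v) := by
  have h := Complex.Gamma_mul_Gamma_eq_betaIntegral (s := (u:ℂ)) (t := (v:ℂ))
    (by simpa using hu) (by simpa using hv)
  have hbeta : Complex.betaIntegral u v = ((∫ t in (0:ℝ)..1, t ^ (u-1) * (1-t) ^ (v-1) : ℝ) : ℂ) := by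
    rw [Complex.betaIntegral, ← intervalIntegral.integral_ofReal]
    apply intervalIntegral.integral_congr
    intro t ht
    rw [uIcc_of_le zero_le_one] at ht
    beta_reduce
    rw [show ((u:ℂ)-1) = ((u-1 : ℝ):ℂ) by push_cast; ring,
      show ((v:ℂ)-1) = ((v-1 : ℝ):ℂ) by push_cast; ring,
      show ((1:ℂ) - (t:ℂ)) = ((1-t : ℝ):ℂ) by push_cast; ring,
      ← Complex.ofReal_cpow ht.1, ← Complex.ofReal_cpow (by linarith [ht.2]), ← Complex.ofReal_mul]
  rw [hbeta, ← Complex.ofReal_add, Complex.Gamma_ofReal, Complex.Gamma_ofReal, Complex.Gamma_ofReal] at h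
  have hne : Real.Gamma (u+v) ≠ 0 := (Real.Gamma_pos_of_pos (by linarith)).ne'
  have h' : Real.Gamma u * Real.Gamma v
      = Real.Gamma (u+v) * ∫ t in (0:ℝ)..1, t ^ (u-1) * (1-t) ^ (v-1) := by exact_mod_cast h
  rw [h', mul_comm, mul_div_assoc, div_self hne, mul_one]

lemma beta_integrable (u v : ℝ) (hu : 0 < u) (hv : 0 < v) :
    IntervalIntegrable (fun t : ℝ => t ^ (u-1) * (1-t) ^ (v-1)) volume 0 1 := by
  have h := (Complex.betaIntegral_convergent (u := (u:ℂ)) (v := (v:ℂ))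
    (by simpa using hu) (by simpa using hv)).norm
  rw [intervalIntegrable_iff] at h ⊢
  apply h.congr_fun ?_ measurableSet_uIoc
  intro t ht
  rw [uIoc_of_le zero_le_one] at ht
  beta_reduce
  rw [show ((u:ℂ)-1) = ((u-1 : ℝ):ℂ) by push_cast; ring,
    show ((v:ℂ)-1) = ((v-1 : ℝ):ℂ) by push_cast; ring,
    show ((1:ℂ) - (t:ℂ)) = ((1-t : ℝ):ℂ) by push_cast; ring,
    ← Complex.ofReal_cpow ht.1.le, ← Complex.ofReal_cpow (by linarith [ht.2]), ← Complex.ofReal_mul,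
    Complex.norm_real, Real.norm_eq_abs,
    abs_of_nonneg (mul_nonneg (Real.rpow_nonneg ht.1.le _) (Real.rpow_nonneg (by linarith [ht.2]) _))]

lemma beta_exp_integrable (u v x : ℝ) (hu : 0 < u) (hv : 0 < v) :
    IntervalIntegrable (fun t : ℝ => Real.exp (x*t) * (t ^ (u-1) * (1-t) ^ (v-1))) volume 0 1 :=
  (beta_integrable u v hu hv).continuousOn_mul (Continuous.continuousOn (by fun_prop))

lemma realM_eq_integral (a b x : ℝ) (ha : 0 < a) (hab : a < b) (hb1 : 1 ≤ b) :
    realM a b x = Real.Gamma b / (Real.Gamma a * Real.Gamma (b-a)) *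
      ∫ t in (0:ℝ)..1, Real.exp (x*t) * (t ^ (a-1) * (1-t) ^ (b-a-1)) := by
  have hba : 0 < b - a := by linarith
  have hb0 : 0 < b := by linarith
  set F : ℕ → ℝ → ℝ := fun n t => x^n / n ! * (t^(a + n - 1) * (1-t)^(b-a-1)) with hF
  have hgint : ∀ n : ℕ, IntegrableOn (fun t : ℝ => t^(a + n - 1) * (1-t)^(b-a-1)) (Ioc 0 1) volume := by
    intro n
    have h := beta_integrable (a + n) (b - a) (by positivity) hba
    rwa [intervalIntegrable_iff_integrableOn_Ioc_of_le zero_le_one] at h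
  have hFint : ∀ n : ℕ, Integrable (F n) (volume.restrict (Ioc 0 1)) := fun n => (hgint n).const_mul _
  have hgmono : ∀ n : ℕ, ∫ t in Ioc (0:ℝ) 1, t^(a + n - 1) * (1-t)^(b-a-1)
      ≤ ∫ t in Ioc (0:ℝ) 1, t^(a - 1) * (1-t)^(b-a-1) := by
    intro n
    have h0 : IntegrableOn (fun t : ℝ => t^(a - 1) * (1-t)^(b-a-1)) (Ioc 0 1) volume := by
      simpa using hgint 0
    apply setIntegral_mono_on (hgint n) h0 measurableSet_Ioc
    intro t ht
    have h1 : t ^ (a + n - 1) ≤ t ^ (a - 1) :=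
      Real.rpow_le_rpow_of_exponent_ge ht.1 ht.2 (by simp)
    exact mul_le_mul_of_nonneg_right h1 (Real.rpow_nonneg (by linarith [ht.2]) _)
  have hnorm : ∀ n : ℕ, ∫ t in Ioc (0:ℝ) 1, ‖F n t‖
      = |x|^n / n ! * ∫ t in Ioc (0:ℝ) 1, t^(a + n - 1) * (1-t)^(b-a-1) := by
    intro n
    rw [← MeasureTheory.integral_const_mul]
    apply setIntegral_congr_fun measurableSet_Ioc
    intro t ht
    have h1 : (0:ℝ) ≤ t^(a + n - 1) * (1-t)^(b-a-1) :=
      mul_nonneg (Real.rpow_nonneg ht.1.le _) (Real.rpow_nonneg (by linarith [ht.2]) _)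
    simp only [hF, Real.norm_eq_abs, abs_mul, abs_div, abs_pow, Nat.abs_cast, abs_of_nonneg h1]
  have hsum : Summable fun n : ℕ => ∫ t in Ioc (0:ℝ) 1, ‖F n t‖ := by
    apply Summable.of_nonneg_of_le (fun n => integral_nonneg (fun t => norm_nonneg _)) ?_
      ((Real.summable_pow_div_factorial |x|).mul_right
        (∫ t in Ioc (0:ℝ) 1, t^(a - 1) * (1-t)^(b-a-1)))
    intro n
    rw [hnorm n]
    have hnn : (0:ℝ) ≤ |x|^n / n ! := by positivity
    exact mul_le_mul_of_nonneg_left (hgmono n) hnn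
  have interchange := MeasureTheory.integral_tsum_of_summable_integral_norm hFint hsum
  have hRHSint : (∫ t in Ioc (0:ℝ) 1, (∑' n, F n t))
      = ∫ t in Ioc (0:ℝ) 1, Real.exp (x*t) * (t^(a-1) * (1-t)^(b-a-1)) := by
    apply setIntegral_congr_fun measurableSet_Ioc
    intro t ht
    have hexp : Real.exp (x*t) = ∑' n : ℕ, (x*t)^n / n ! := by
      rw [Real.exp_eq_exp_ℝ, NormedSpace.exp_eq_tsum_div]
    have key : ∀ n : ℕ, F n t = (x*t)^n / n ! * (t^(a-1) * (1-t)^(b-a-1)) := by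
      intro n
      have h2 : t^(a + n - 1) = t^(n:ℕ) * t^(a-1) := by
        rw [← Real.rpow_natCast t n, ← Real.rpow_add ht.1]; ring_nf
      simp only [hF]
      rw [h2, mul_pow]; ring
    beta_reduce
    rw [tsum_congr key, tsum_mul_right, hexp]
  have hLHS : ∀ n : ℕ, (∫ t in Ioc (0:ℝ) 1, F n t)
      = x^n / n ! * ((ascPochhammer ℝ n).eval a * Real.Gamma a * Real.Gamma (b-a)
          / ((ascPochhammer ℝ n).eval b * Real.Gamma b)) := by
    intro n
    simp only [hF]
    rw [MeasureTheory.integral_const_mul]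
    congr 1
    have h := real_beta (a+n) (b-a) (by positivity) hba
    rw [intervalIntegral.integral_of_le zero_le_one] at h
    have h1 : a + (n:ℝ) + (b - a) = b + n := by ring
    rw [show a + (n:ℝ) - 1 = a + n - 1 from rfl] at h
    rw [h, h1, Gamma_poch a ha n, Gamma_poch b hb0 n]
  rw [realM, intervalIntegral.integral_of_le zero_le_one, ← hRHSint, ← interchange, ← tsum_mul_left]
  apply tsum_congr
  intro n
  rw [hLHS n]
  have hpochb : (0:ℝ) < (ascPochhammer ℝ n).eval b := ascPochhammer_pos n b hb0
  have hga := Real.Gamma_pos_of_pos ha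
  have hgb := Real.Gamma_pos_of_pos hb0
  have hgba := Real.Gamma_pos_of_pos hba
  have hfn : (0:ℝ) < (n ! : ℝ) := by positivity
  field_simp

lemma aux_rpow_exp (aa c : ℝ) (hc : 0 < c) :
    Tendsto (fun y : ℝ => y ^ (-aa) * Real.exp (-(c / y))) (𝓝[>] 0) (𝓝 0) := by
  have h3 := (tendsto_rpow_mul_exp_neg_mul_atTop_nhds_zero aa c hc).comp tendsto_inv_nhdsGT_zero
  apply h3.congr'
  filter_upwards [self_mem_nhdsWithin] with y hy
  have hy0 : (0:ℝ) < y := hy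
  simp only [Function.comp_apply]
  rw [Real.inv_rpow hy0.le, ← Real.rpow_neg hy0.le, neg_mul, div_eq_mul_inv]

lemma exp_rpow_integrable (aa c : ℝ) (ha : 0 < aa) (hc : 0 < c) :
    IntegrableOn (fun s : ℝ => s ^ (aa - 1) * Real.exp (-(c * s))) (Ioi 0) := by
  have h := integrableOn_rpow_mul_exp_neg_mul_rpow (s := aa - 1) (p := 1) (b := c)
    (by linarith) one_pos hc
  apply h.congr_fun ?_ measurableSet_Ioi
  intro s hs
  simp [Real.rpow_one]

lemma J1_tendsto (a b c : ℝ) (ha : 0 < a) (hc : 0 < c) :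
    Tendsto (fun y : ℝ => ∫ s in Ioi (0:ℝ),
        (Ioc (0:ℝ) (1/(2*y))).indicator
          (fun s => s^(a-1) * Real.exp (-(c*s)) * (1-y*s)^(b-a-1)) s)
      (𝓝[>] 0) (𝓝 (∫ s in Ioi (0:ℝ), s^(a-1) * Real.exp (-(c*s)))) := by
  set K := max ((1/2:ℝ) ^ (b-a-1)) 1 with hK
  have hK1 : (1:ℝ) ≤ K := le_max_right _ _
  have hKclaim : ∀ u : ℝ, 1/2 ≤ u → u ≤ 1 → u ^ (b-a-1) ≤ K := by
    intro u hu1 hu2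
    rcases le_or_gt 0 (b-a-1) with he | he
    · exact le_trans (Real.rpow_le_one (by linarith) hu2 he) hK1
    · exact le_trans (Real.rpow_le_rpow_of_nonpos (by norm_num) hu1 he.le) (le_max_left _ _)
  apply MeasureTheory.tendsto_integral_filter_of_dominated_convergence
    (fun s => K * (s^(a-1) * Real.exp (-(c*s))))
  · apply Eventually.of_forall
    intro y
    apply Measurable.aestronglyMeasurable
    exact Measurable.indicator (by fun_prop) measurableSet_Ioc
  · filter_upwards [self_mem_nhdsWithin] with y hy
    have hy0 : (0:ℝ) < y := hy
    rw [ae_restrict_iff' measurableSet_Ioi]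
    apply Eventually.of_forall
    intro s hs
    by_cases hmem : s ∈ Ioc 0 (1/(2*y))
    · rw [indicator_of_mem hmem]
      have hys : y * s ≤ 1/2 := by
        have := hmem.2
        rw [le_div_iff₀ (by positivity)] at this
        nlinarith
      have h1 : 1/2 ≤ 1 - y*s := by linarith
      have h2 : 1 - y*s ≤ 1 := by nlinarith [hmem.1, hy0]
      have hnn : (0:ℝ) ≤ s^(a-1) * Real.exp (-(c*s)) :=
        mul_nonneg (Real.rpow_nonneg hmem.1.le _) (Real.exp_pos _).le
      rw [Real.norm_eq_abs, abs_of_nonneg (mul_nonneg hnn (Real.rpow_nonneg (by linarith) _))]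
      calc s^(a-1) * Real.exp (-(c*s)) * (1-y*s)^(b-a-1)
          ≤ s^(a-1) * Real.exp (-(c*s)) * K :=
            mul_le_mul_of_nonneg_left (hKclaim _ h1 h2) hnn
        _ = K * (s^(a-1) * Real.exp (-(c*s))) := by ring
    · rw [indicator_of_notMem hmem]
      simp only [norm_zero]
      have hnn : (0:ℝ) ≤ s^(a-1) * Real.exp (-(c*s)) :=
        mul_nonneg (Real.rpow_nonneg (le_of_lt hs) _) (Real.exp_pos _).le
      exact mul_nonneg (by linarith) hnn
  · exact (exp_rpow_integrable a c ha hc).const_mul K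
  · rw [ae_restrict_iff' measurableSet_Ioi]
    apply Eventually.of_forall
    intro s hs
    have hs0 : (0:ℝ) < s := hs
    have h1 : Tendsto (fun y : ℝ => 1 - y*s) (𝓝[>] 0) (𝓝 1) := by
      have hcont : Continuous fun y : ℝ => 1 - y*s := by continuity
      have := (hcont.tendsto 0).mono_left (nhdsWithin_le_nhds (s := Ioi (0:ℝ)))
      simpa using this
    have h2 : Tendsto (fun y : ℝ => (1-y*s)^(b-a-1)) (𝓝[>] 0) (𝓝 1) := by
      have hcont : ContinuousAt (fun u : ℝ => u^(b-a-1)) 1 :=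
        Real.continuousAt_rpow_const 1 _ (Or.inl one_ne_zero)
      have := hcont.tendsto.comp h1
      simpa [Real.one_rpow, Function.comp_def] using this
    have h3 : Tendsto (fun y : ℝ => s^(a-1) * Real.exp (-(c*s)) * (1-y*s)^(b-a-1)) (𝓝[>] 0)
        (𝓝 (s^(a-1) * Real.exp (-(c*s)))) := by
      have := (tendsto_const_nhds (x := s^(a-1) * Real.exp (-(c*s)))).mul h2
      simpa using this
    apply h3.congr'
    have hmm : Iio (1/(2*s)) ∈ 𝓝[>] (0:ℝ) :=
      nhdsWithin_le_nhds (Iio_mem_nhds (by positivity))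
    filter_upwards [hmm, self_mem_nhdsWithin] with y hy1 hy2
    have hy0 : (0:ℝ) < y := hy2
    have hmem : s ∈ Ioc 0 (1/(2*y)) := by
      constructor
      · exact hs0
      · simp only [mem_Iio] at hy1
        rw [le_div_iff₀ (by positivity)]
        rw [lt_div_iff₀ (by positivity)] at hy1
        nlinarith
    rw [indicator_of_mem hmem]

lemma J1_eq (a b c y : ℝ) (hy0 : 0 < y) :
    (∫ s in Ioi (0:ℝ), (Ioc (0:ℝ) (1/(2*y))).indicator
        (fun s => s^(a-1) * Real.exp (-(c*s)) * (1-y*s)^(b-a-1)) s)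
      = y^(-a) * ∫ t in (0:ℝ)..(1/2), Real.exp (-(c/y)*t) * (t^(a-1)*(1-t)^(b-a-1)) := by
  have h2y : (0:ℝ) < 1/(2*y) := by positivity
  rw [setIntegral_indicator measurableSet_Ioc,
    inter_eq_self_of_subset_right Ioc_subset_Ioi_self]
  have key : ∀ s ∈ Ioc (0:ℝ) (1/(2*y)),
      s^(a-1) * Real.exp (-(c*s)) * (1-y*s)^(b-a-1)
        = y^(1-a) * (Real.exp (-(c/y)*(y*s)) * ((y*s)^(a-1)*(1-y*s)^(b-a-1))) := by
    intro s hs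
    have h1 : (y*s)^(a-1) = y^(a-1) * s^(a-1) := Real.mul_rpow hy0.le hs.1.le
    have h2 : -(c/y)*(y*s) = -(c*s) := by field_simp
    have h3 : y^(1-a) * y^(a-1) = 1 := by
      rw [← Real.rpow_add hy0]; norm_num
    rw [h1, h2]
    calc s^(a-1) * Real.exp (-(c*s)) * (1-y*s)^(b-a-1)
        = (y^(1-a) * y^(a-1)) * (s^(a-1) * Real.exp (-(c*s)) * (1-y*s)^(b-a-1)) := by
          rw [h3]; ring
      _ = y^(1-a) * (Real.exp (-(c*s)) * (y^(a-1) * s^(a-1)*(1-y*s)^(b-a-1))) := by ring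
  rw [setIntegral_congr_fun measurableSet_Ioc key, MeasureTheory.integral_const_mul,
    ← intervalIntegral.integral_of_le h2y.le]
  have hsub := intervalIntegral.integral_comp_mul_left
    (f := fun t => Real.exp (-(c/y)*t) * (t^(a-1)*(1-t)^(b-a-1)))
    (a := 0) (b := 1/(2*y)) hy0.ne'
  rw [mul_zero, show y*(1/(2*y)) = 1/2 by field_simp] at hsub
  rw [hsub, smul_eq_mul, ← mul_assoc]
  congr 1
  rw [show (1:ℝ) - a = (1-a) from rfl, ← Real.rpow_neg_one y, ← Real.rpow_add hy0]
  congr 1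
  ring

lemma J2_tendsto (a b c : ℝ) (ha : 0 < a) (hab : a < b) (hc : 0 < c) :
    Tendsto (fun y : ℝ => y^(-a) * ∫ t in (1/2:ℝ)..1,
      Real.exp (-(c/y)*t) * (t^(a-1)*(1-t)^(b-a-1))) (𝓝[>] 0) (𝓝 0) := by
  have hba : 0 < b - a := by linarith
  have hmem1 : (1/2:ℝ) ∈ uIcc (0:ℝ) 1 := by
    rw [uIcc_of_le zero_le_one]; exact ⟨by norm_num, by norm_num⟩
  have hmem2 : (1:ℝ) ∈ uIcc (0:ℝ) 1 := by
    rw [uIcc_of_le zero_le_one]; exact ⟨by norm_num, by norm_num⟩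
  have hbeta : IntervalIntegrable (fun t : ℝ => t^(a-1)*(1-t)^(b-a-1)) volume (1/2) 1 :=
    (beta_integrable a (b-a) ha hba).mono_set (uIcc_subset_uIcc hmem1 hmem2)
  set K2 := ∫ t in (1/2:ℝ)..1, t^(a-1)*(1-t)^(b-a-1) with hK2
  apply squeeze_zero' ?pos ?le ?lim
  case pos =>
    filter_upwards [self_mem_nhdsWithin] with y hy
    have hy0 : (0:ℝ) < y := hy
    apply mul_nonneg (Real.rpow_nonneg hy0.le _)
    apply intervalIntegral.integral_nonneg (by norm_num)
    intro t ht
    have h1 : (0:ℝ) ≤ t := le_trans (by norm_num) ht.1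
    exact mul_nonneg (Real.exp_pos _).le
      (mul_nonneg (Real.rpow_nonneg h1 _) (Real.rpow_nonneg (by linarith [ht.2]) _))
  case le =>
    filter_upwards [self_mem_nhdsWithin] with y hy
    have hy0 : (0:ℝ) < y := hy
    have hint1 : IntervalIntegrable
        (fun t : ℝ => Real.exp (-(c/y)*t) * (t^(a-1)*(1-t)^(b-a-1))) volume (1/2) 1 :=
      (beta_exp_integrable a (b-a) (-(c/y)) ha hba).mono_set (uIcc_subset_uIcc hmem1 hmem2)
    have hmono : (∫ t in (1/2:ℝ)..1, Real.exp (-(c/y)*t) * (t^(a-1)*(1-t)^(b-a-1)))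
        ≤ ∫ t in (1/2:ℝ)..1, Real.exp (-((c/2)/y)) * (t^(a-1)*(1-t)^(b-a-1)) := by
      apply intervalIntegral.integral_mono_on (by norm_num) hint1 (hbeta.const_mul _)
      intro t ht
      have hcy : (0:ℝ) < c/y := by positivity
      have hexp : -(c/y)*t ≤ -((c/2)/y) := by
        have h5 : (c/2)/y = (c/y) * (1/2) := by ring
        rw [h5]
        nlinarith [ht.1]
      have h1 : (0:ℝ) ≤ t := le_trans (by norm_num) ht.1
      exact mul_le_mul_of_nonneg_right (Real.exp_le_exp.2 hexp)
        (mul_nonneg (Real.rpow_nonneg h1 _) (Real.rpow_nonneg (by linarith [ht.2]) _))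
    calc y^(-a) * ∫ t in (1/2:ℝ)..1, Real.exp (-(c/y)*t) * (t^(a-1)*(1-t)^(b-a-1))
        ≤ y^(-a) * ∫ t in (1/2:ℝ)..1, Real.exp (-((c/2)/y)) * (t^(a-1)*(1-t)^(b-a-1)) :=
          mul_le_mul_of_nonneg_left hmono (Real.rpow_nonneg hy0.le _)
      _ = (y^(-a) * Real.exp (-((c/2)/y))) * K2 := by
          rw [intervalIntegral.integral_const_mul]; ring
  case lim =>
    have := (aux_rpow_exp a (c/2) (by positivity)).mul_const K2
    simpa using this

lemma base_case (a b c : ℝ) (ha : 0 < a) (hab : a < b) (hb1 : 1 < b) (hc : 0 < c) :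
    Tendsto (fun y : ℝ => y^(-a) * realM a b (-(c/y))) (𝓝[>] 0)
      (𝓝 (c^(-a) * Real.Gamma b / Real.Gamma (b-a))) := by
  have hba : 0 < b - a := by linarith
  have hga := Real.Gamma_pos_of_pos ha
  have hgb := Real.Gamma_pos_of_pos (show (0:ℝ) < b by linarith)
  have hgba := Real.Gamma_pos_of_pos hba
  have hmem0 : (0:ℝ) ∈ uIcc (0:ℝ) 1 := by
    rw [uIcc_of_le zero_le_one]; exact ⟨by norm_num, by norm_num⟩
  have hmem1 : (1/2:ℝ) ∈ uIcc (0:ℝ) 1 := by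
    rw [uIcc_of_le zero_le_one]; exact ⟨by norm_num, by norm_num⟩
  have hmem2 : (1:ℝ) ∈ uIcc (0:ℝ) 1 := by
    rw [uIcc_of_le zero_le_one]; exact ⟨by norm_num, by norm_num⟩
  set C := Real.Gamma b / (Real.Gamma a * Real.Gamma (b-a)) with hC
  have hJ1 : Tendsto (fun y : ℝ => y^(-a) * ∫ t in (0:ℝ)..(1/2),
      Real.exp (-(c/y)*t) * (t^(a-1)*(1-t)^(b-a-1))) (𝓝[>] 0)
      (𝓝 ((1/c)^a * Real.Gamma a)) := by
    have hmain := J1_tendsto a b c ha hc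
    rw [integral_rpow_mul_exp_neg_mul_Ioi ha hc] at hmain
    apply hmain.congr'
    filter_upwards [self_mem_nhdsWithin] with y hy
    exact J1_eq a b c y hy
  have hJ2 := J2_tendsto a b c ha hab hc
  have hcomb := (hJ1.add hJ2).const_mul C
  have hgoal : Tendsto (fun y : ℝ => y^(-a) * realM a b (-(c/y))) (𝓝[>] 0)
      (𝓝 (C * ((1/c)^a * Real.Gamma a + 0))) := by
    apply hcomb.congr'
    filter_upwards [self_mem_nhdsWithin] with y hy
    have hy0 : (0:ℝ) < y := hy
    have hint1 : IntervalIntegrable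
        (fun t : ℝ => Real.exp (-(c/y)*t) * (t^(a-1)*(1-t)^(b-a-1))) volume 0 (1/2) :=
      (beta_exp_integrable a (b-a) (-(c/y)) ha hba).mono_set (uIcc_subset_uIcc hmem0 hmem1)
    have hint2 : IntervalIntegrable
        (fun t : ℝ => Real.exp (-(c/y)*t) * (t^(a-1)*(1-t)^(b-a-1))) volume (1/2) 1 :=
      (beta_exp_integrable a (b-a) (-(c/y)) ha hba).mono_set (uIcc_subset_uIcc hmem1 hmem2)
    have hsplit : realM a b (-(c/y)) = C *
        ((∫ t in (0:ℝ)..(1/2), Real.exp (-(c/y)*t) * (t^(a-1)*(1-t)^(b-a-1)))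
          + ∫ t in (1/2:ℝ)..1, Real.exp (-(c/y)*t) * (t^(a-1)*(1-t)^(b-a-1))) := by
      rw [realM_eq_integral a b (-(c/y)) ha hab hb1.le]
      rw [intervalIntegral.integral_add_adjacent_intervals hint1 hint2]
    rw [hsplit]
    ring
  have hval : C * ((1/c)^a * Real.Gamma a + 0) = c^(-a) * Real.Gamma b / Real.Gamma (b-a) := by
    rw [add_zero, one_div, Real.inv_rpow hc.le, ← Real.rpow_neg hc.le, hC]
    field_simp
  rwa [hval] at hgoal

lemma realM_tendsto (c : ℝ) (hc : 0 < c) :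
    ∀ n : ℕ, ∀ a b : ℝ, 1 < b → a < b → -(n:ℝ) < a →
    Tendsto (fun y : ℝ => y^(-a) * realM a b (-(c/y))) (𝓝[>] 0)
      (𝓝 (c^(-a) * Real.Gamma b / Real.Gamma (b-a))) := by
  intro n
  induction n with
  | zero =>
      intro a b hb1 hab ha
      exact base_case a b c (by simpa using ha) hab hb1 hc
  | succ n ih =>
      intro a b hb1 hab ha
      by_cases ha0 : 0 < a
      · exact base_case a b c ha0 hab hb1 hc
      push_neg at ha0
      have ha1 : -(n:ℝ) < a + 1 := by push_cast at ha ⊢; linarith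
      have h1 := ih (a+1) b hb1 (by linarith) ha1
      have h2 := ih (a+1) (b+1) (by linarith) (by linarith) ha1
      have hid : Tendsto (fun y : ℝ => y) (𝓝[>] (0:ℝ)) (𝓝 0) :=
        tendsto_id.mono_left nhdsWithin_le_nhds
      have hcomb := (hid.mul h1).add (h2.const_mul (c/b))
      have hbne : b ≠ 0 := by linarith
      have hgba : Real.Gamma (b-a) ≠ 0 := (Real.Gamma_pos_of_pos (by linarith)).ne'
      have hcc : c * c^(-(a+1)) = c^(-a) := by
        nth_rewrite 1 [← Real.rpow_one c]
        rw [← Real.rpow_add hc]; congr 1; ring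
      have hval : (0 * (c^(-(a+1)) * Real.Gamma b / Real.Gamma (b-(a+1)))
          + (c/b) * (c^(-(a+1)) * Real.Gamma (b+1) / Real.Gamma ((b+1)-(a+1))))
          = c^(-a) * Real.Gamma b / Real.Gamma (b-a) := by
        rw [zero_mul, zero_add, show (b:ℝ)+1-(a+1) = b-a by ring,
          Real.Gamma_add_one hbne, ← hcc]
        field_simp
      rw [← hval]
      apply hcomb.congr'
      filter_upwards [self_mem_nhdsWithin] with y hy
      have hy0 : (0:ℝ) < y := hy
      have hsolve : realM a b (-(c/y)) = realM (a+1) b (-(c/y))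
          + c/(y*b) * realM (a+1) (b+1) (-(c/y)) := by
        rw [realM_rec a b (-(c/y)) hb1.le]
        ring
      have e1 : y * y^(-(a+1)) = y^(-a) := by
        nth_rewrite 1 [← Real.rpow_one y]
        rw [← Real.rpow_add hy0]; congr 1; ring
      rw [hsolve, ← e1]
      field_simp

theorem kummerM_asymptotics_at_minus_infty (a b c : ℝ) (hb1 : 1 < b) (hba : a < b)
    (hbint : ∀ n : ℤ, b ≠ n) (hbanot : ∀ n : ℕ, b - a ≠ -(n : ℝ)) (hc : 0 < c) :
    Filter.Tendsto
      (fun y : ℝ => (y : ℂ) ^ (-(a : ℂ)) * kummerM a b (-c / y))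
      (nhdsWithin 0 (Set.Ioi 0))
      (nhds ((c : ℂ) ^ (-(a : ℂ)) * Real.Gamma b / Real.Gamma (b - a))) := by
  obtain ⟨n, hn⟩ := exists_nat_gt (-a)
  have hreal := realM_tendsto c hc n a b hb1 hba (by linarith)
  have hcoe := Filter.Tendsto.ofReal hreal
  have hval : (((c^(-a) * Real.Gamma b / Real.Gamma (b-a) : ℝ)) : ℂ)
      = (c:ℂ)^(-(a:ℂ)) * Real.Gamma b / Real.Gamma (b-a) := by
    rw [Complex.ofReal_div, Complex.ofReal_mul, Complex.ofReal_cpow hc.le, Complex.ofReal_neg]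
  rw [show (nhdsWithin (0:ℝ) (Set.Ioi 0)) = 𝓝[>] (0:ℝ) from rfl, ← hval]
  apply hcoe.congr'
  filter_upwards [self_mem_nhdsWithin] with y hy
  have hy0 : (0:ℝ) < y := hy
  rw [Complex.ofReal_mul, Complex.ofReal_cpow hy0.le, Complex.ofReal_neg, ← kummerM_ofReal]
  congr 1
  push_cast
  ring
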